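/- Let A ∈ ℝ^{n×n}, B ∈ ℝ^{n×m}, C ∈ ℝ^{p×n}, K ∈ ℝ^{m×n}, R ≻ 0. Suppose (A, C) is observable. Then the block matrix Ω₀ = [[ −A + BK, −B ], [ 0, 0 ], [ C, 0 ], [ −√R K, √R ]] ∈ ℝ^{(2n+p+m)×(n+m)} evaluated at λ = 0 (replacing the zero block appropriately: rows are [−A+BK, −B], [0, 0·I], [C, 0], [−√R K, √R]) has full column rank n + m; equivalently, if Ω₀ r = 0 with r = (r₁, r₂) then r₁ = 0 and r₂ = 0. -/

import Mathlib

/-!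
The last block row says `√R (r₂ - K r₁) = 0`, and `√R` is injective because `√R · √R = R` is
invertible; hence `r₂ = K r₁`. Substituted into the first block row this leaves `A r₁ = 0`, so
together with `C r₁ = 0` every row block `C Aⁱ` of the observability matrix kills `r₁`, and its full
column rank forces `r₁ = 0`, whence `r₂ = 0`.
-/

open Matrix

/-- Observability matrix of the pair `(A, C)`. -/
noncomputable def obsMat {n : ℕ} {o : Type*} (A : Matrix (Fin n) (Fin n) ℝ)
    (C : Matrix o (Fin n) ℝ) : Matrix (Fin n × o) (Fin n) ℝ :=
  fun ik j => (C * A ^ (ik.1 : ℕ)) ik.2 j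

/-- The square root of a positive semidefinite matrix, as `Matrix.PosSemidef.sqrt` was defined
in the older Mathlib (removed since). -/
noncomputable def Matrix.PosSemidef.sqrt {n : Type*} [Fintype n] [DecidableEq n]
    {A : Matrix n n ℝ} (hA : A.PosSemidef) : Matrix n n ℝ :=
  (hA.1.eigenvectorUnitary : Matrix n n ℝ) * diagonal ((↑) ∘ Real.sqrt ∘ hA.1.eigenvalues) *
    (star (hA.1.eigenvectorUnitary : Matrix n n ℝ))

theorem Matrix.PosSemidef.sqrt_mul_self {n : Type*} [Fintype n] [DecidableEq n]
    {A : Matrix n n ℝ} (hA : A.PosSemidef) : hA.sqrt * hA.sqrt = A := by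
  set U : Matrix n n ℝ := (hA.1.eigenvectorUnitary : Matrix n n ℝ)
  have hU : star U * U = 1 := Unitary.coe_star_mul_self _
  have hD : diagonal ((↑) ∘ Real.sqrt ∘ hA.1.eigenvalues) *
      diagonal ((↑) ∘ Real.sqrt ∘ hA.1.eigenvalues) =
        diagonal (RCLike.ofReal ∘ hA.1.eigenvalues : n → ℝ) := by
    rw [diagonal_mul_diagonal]
    congr 1
    funext i
    simp [Real.mul_self_sqrt (hA.eigenvalues_nonneg i)]
  conv_rhs => rw [hA.1.spectral_theorem, Unitary.conjStarAlgAut_apply, ← hD]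
  simp only [Matrix.PosSemidef.sqrt, Matrix.mul_assoc]
  rw [← Matrix.mul_assoc (star U) U, hU, Matrix.one_mul]

theorem Matrix.PosDef.mulVec_sqrt_injective {n : Type*} [Fintype n] [DecidableEq n]
    {R : Matrix n n ℝ} (hR : R.PosDef) : Function.Injective hR.posSemidef.sqrt.mulVec := by
  intro x y hxy
  apply mulVec_injective_iff_isUnit.mpr hR.isUnit
  rw [← hR.posSemidef.sqrt_mul_self, ← mulVec_mulVec, ← mulVec_mulVec, hxy]

theorem Matrix.mulVec_injective_of_rank_eq_card {K m n : Type*} [Field K] [Fintype n]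
    {M : Matrix m n K} (h : M.rank = Fintype.card n) : Function.Injective M.mulVec := by
  have hker : Module.finrank K (LinearMap.ker M.mulVecLin) = 0 := by
    have := LinearMap.finrank_range_add_finrank_ker M.mulVecLin
    rw [Module.finrank_fintype_fun_eq_card] at this
    change M.rank + _ = _ at this
    omega
  exact LinearMap.ker_eq_bot.mp (Submodule.finrank_eq_zero.mp hker)

theorem Matrix.mul_pow_mulVec_eq_zero {α n o : Type*} [CommSemiring α] [Fintype n]
    [DecidableEq n] {A : Matrix n n α} {C : Matrix o n α} {v : n → α} (hA : A *ᵥ v = 0) (hC : C *ᵥ v = 0) :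
    ∀ i : ℕ, (C * A ^ i) *ᵥ v = 0
  | 0 => by simpa using hC
  | i + 1 => by rw [pow_succ, ← Matrix.mul_assoc, ← mulVec_mulVec, hA, mulVec_zero]

theorem eq_zero_of_obsMat_rank_eq {n : ℕ} {o : Type*} {A : Matrix (Fin n) (Fin n) ℝ}
    {C : Matrix o (Fin n) ℝ} (hobs : (obsMat A C).rank = n) {v : Fin n → ℝ}
    (hA : A *ᵥ v = 0) (hC : C *ᵥ v = 0) : v = 0 := by
  refine mulVec_injective_of_rank_eq_card (by simpa using hobs) (?_ : _ = (obsMat A C) *ᵥ 0)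
  funext ik
  simpa [obsMat, mulVec, dotProduct] using congrFun (mul_pow_mulVec_eq_zero hA hC ik.1) ik.2

theorem hautus_rank_at_zero_general
    {n m p : ℕ} (A : Matrix (Fin n) (Fin n) ℝ) (B : Matrix (Fin n) (Fin m) ℝ)
    (C : Matrix (Fin p) (Fin n) ℝ) (K : Matrix (Fin m) (Fin n) ℝ)
    (R : Matrix (Fin m) (Fin m) ℝ) (hR : R.PosDef)
    (hobs : (obsMat A C).rank = n)
    (r₁ : Fin n → ℝ) (r₂ : Fin m → ℝ)
    (h1 : (-A + B * K) *ᵥ r₁ + (-B) *ᵥ r₂ = 0)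
    (h3 : C *ᵥ r₁ = 0)
    (h4 : (-(hR.posSemidef.sqrt * K)) *ᵥ r₁ + hR.posSemidef.sqrt *ᵥ r₂ = 0) :
    r₁ = 0 ∧ r₂ = 0 := by
  have hr₂ : r₂ = K *ᵥ r₁ := by
    refine hR.mulVec_sqrt_injective ?_
    rw [neg_mulVec, ← mulVec_mulVec] at h4
    linear_combination h4
  have hA : A *ᵥ r₁ = 0 := by
    rw [add_mulVec, neg_mulVec, neg_mulVec, ← mulVec_mulVec, ← hr₂] at h1
    linear_combination (norm := module) -h1
  have hr₁ : r₁ = 0 := eq_zero_of_obsMat_rank_eq hobs hA h3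
  exact ⟨hr₁, by rw [hr₂, hr₁, mulVec_zero]⟩

theorem hautus_rank_at_zero
    {n m p : ℕ} (A : Matrix (Fin n) (Fin n) ℝ) (B : Matrix (Fin n) (Fin m) ℝ)
    (C : Matrix (Fin p) (Fin n) ℝ) (K : Matrix (Fin m) (Fin n) ℝ)
    (R : Matrix (Fin m) (Fin m) ℝ) (hR : R.PosDef)
    (hobs : (obsMat A C).rank = n)
    (r₁ : Fin n → ℝ) (r₂ : Fin m → ℝ)
    (h1 : (-A + B * K) *ᵥ r₁ + (-B) *ᵥ r₂ = 0)
    (h2 : (0 : Matrix (Fin m) (Fin n) ℝ) *ᵥ r₁ + ((0 : ℝ) • (1 : Matrix (Fin m) (Fin m) ℝ)) *ᵥ r₂ = 0)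
    (h3 : C *ᵥ r₁ = 0)
    (h4 : (-(hR.posSemidef.sqrt * K)) *ᵥ r₁ + hR.posSemidef.sqrt *ᵥ r₂ = 0) :
    r₁ = 0 ∧ r₂ = 0 :=
  hautus_rank_at_zero_general A B C K R hR hobs r₁ r₂ h1 h3 h4
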